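/- arXiv:1803.07837 — 4 statements merged into one kernel-verified Lean document; each statement's English description precedes it below -/
import Mathlib

section
/- Let κ > 0, α > 0, β ∈ ℝ, and let τ be a C² solution of τ'' = 2κ/τ with τ(0) = α, τ'(0) = β, defined on its maximal interval of existence and with τ > 0. Then τ(t) ≥ exp(-(β² - 4κ ln α)/(4κ)) for all t in the interval of existence. In particular τ stays uniformly bounded away from 0. -/
/-!
Along a positive solution of `τ'' = 2κ/τ` the energy `(τ')² - 4κ ln τ` is conserved, so
`4κ ln τ(t) = τ'(t)² - C ≥ -C` with `C = β² - 4κ ln α`; exponentiating gives the bound.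
-/

open Set Real

theorem Convex.eq_of_hasDerivWithinAt_zero {E : Type*} [NormedAddCommGroup E] [NormedSpace ℝ E]
    {s : Set ℝ} {f : ℝ → E} (hs : Convex ℝ s) (hf : ∀ x ∈ s, HasDerivWithinAt f 0 s x)
    {x y : ℝ} (hx : x ∈ s) (hy : y ∈ s) : f y = f x := by
  have := hs.norm_image_sub_le_of_norm_hasDerivWithin_le hf (fun _ _ => norm_zero.le) hx hy
  simpa only [zero_mul, norm_le_zero_iff, sub_eq_zero] using this

noncomputable def odeEnergy (κ : ℝ) (τ τ' : ℝ → ℝ) (t : ℝ) : ℝ :=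
  τ' t ^ 2 - 4 * κ * log (τ t)

theorem hasDerivAt_odeEnergy {κ t : ℝ} {τ τ' : ℝ → ℝ} (hτt : τ t ≠ 0)
    (hτ : HasDerivAt τ (τ' t) t) (hτ' : HasDerivAt τ' (2 * κ / τ t) t) :
    HasDerivAt (odeEnergy κ τ τ') 0 t := by
  have h := (hτ'.fun_pow 2).fun_sub ((hτ.log hτt).const_mul (4 * κ))
  rwa [show (2 : ℕ) * τ' t ^ (2 - 1) * (2 * κ / τ t) - 4 * κ * (τ' t / τ t) = 0 by
    field_simp; ring] at h

theorem odeEnergy_eq_of_mem_Ico {κ T t : ℝ} {τ τ' : ℝ → ℝ}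
    (hne : ∀ s ∈ Ico (0:ℝ) T, τ s ≠ 0)
    (hτ : ∀ s ∈ Ico (0:ℝ) T, HasDerivAt τ (τ' s) s)
    (hτ' : ∀ s ∈ Ico (0:ℝ) T, HasDerivAt τ' (2 * κ / τ s) s) (ht : t ∈ Ico (0:ℝ) T) :
    odeEnergy κ τ τ' t = odeEnergy κ τ τ' 0 :=
  (convex_Ico 0 T).eq_of_hasDerivWithinAt_zero
    (fun s hs => (hasDerivAt_odeEnergy (hne s hs) (hτ s hs) (hτ' s hs)).hasDerivWithinAt)
    ⟨le_rfl, ht.1.trans_lt ht.2⟩ ht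

theorem exp_neg_div_le_of_sq_sub_mul_log_eq {κ C v x : ℝ} (hκ : 0 < κ) (hx : 0 < x)
    (h : v ^ 2 - 4 * κ * log x = C) : exp (-C / (4 * κ)) ≤ x := by
  rw [← exp_log hx, exp_le_exp, div_le_iff₀ (by positivity)]
  nlinarith [sq_nonneg v]

theorem stmt_1_general (κ α β T : ℝ) (hκ : 0 < κ)
    (τ τ' : ℝ → ℝ)
    (hpos : ∀ t ∈ Ico (0:ℝ) T, 0 < τ t)
    (hτ : ∀ t ∈ Ico (0:ℝ) T, HasDerivAt τ (τ' t) t)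
    (hτ' : ∀ t ∈ Ico (0:ℝ) T, HasDerivAt τ' (2 * κ / τ t) t)
    (h0 : τ 0 = α) (h0' : τ' 0 = β) :
    ∀ t ∈ Ico (0:ℝ) T,
      Real.exp (-(β ^ 2 - 4 * κ * Real.log α) / (4 * κ)) ≤ τ t := by
  intro t ht
  have hE := odeEnergy_eq_of_mem_Ico (fun s hs => (hpos s hs).ne') hτ hτ' ht
  rw [odeEnergy, odeEnergy, h0, h0'] at hE
  exact exp_neg_div_le_of_sq_sub_mul_log_eq hκ (hpos t ht) hE

/-- The solution of τ'' = 2κ/τ stays uniformly bounded away from 0: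
    τ(t) ≥ exp(−(β² − 4κ ln α)/(4κ)). -/
theorem stmt_1 (κ α β T : ℝ) (hκ : 0 < κ) (hα : 0 < α) (hT : 0 < T)
    (τ τ' : ℝ → ℝ)
    (hpos : ∀ t ∈ Ico (0:ℝ) T, 0 < τ t)
    (hτ : ∀ t ∈ Ico (0:ℝ) T, HasDerivAt τ (τ' t) t)
    (hτ' : ∀ t ∈ Ico (0:ℝ) T, HasDerivAt τ' (2 * κ / τ t) t)
    (h0 : τ 0 = α) (h0' : τ' 0 = β) :
    ∀ t ∈ Ico (0:ℝ) T,
      Real.exp (-(β ^ 2 - 4 * κ * Real.log α) / (4 * κ)) ≤ τ t :=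
  stmt_1_general κ α β T hκ τ τ' hpos hτ hτ' h0 h0'
end

section
/- Let κ > 0, ε, ν ≥ 0, and let τ be a positive C² solution on [0,T) of τ'' = 2κ/τ + ε²/τ³ − ν τ'/τ² with τ(0) = α, τ'(0) = β. Then τ(t) ≥ exp(−C/(4κ)) for all t ∈ [0,T), where C = β² − 4κ ln α + ε²/(2α²). In particular the solution extends globally in time. -/
open Set

/-!
Multiplying the equation by `2τ'` shows that the energy `τ'² + ε²/τ² - 4κ log τ` has derivative
`-2ν (τ'/τ)² ≤ 0`, so it never exceeds its initial value. Dropping `τ'² ≥ 0` then bounds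
`-4κ log τ` from above by a constant, i.e. `τ` from below.
-/

lemma antitoneOn_of_hasDerivAt_nonpos {D : Set ℝ} (hD : Convex ℝ D) {f f' : ℝ → ℝ}
    (hf : ∀ x ∈ D, HasDerivAt f (f' x) x) (hf' : ∀ x ∈ D, f' x ≤ 0) : AntitoneOn f D :=
  antitoneOn_of_hasDerivWithinAt_nonpos hD
    (fun x hx ↦ (hf x hx).continuousAt.continuousWithinAt)
    (fun x hx ↦ (hf x (interior_subset hx)).hasDerivWithinAt)
    (fun x hx ↦ hf' x (interior_subset hx))

noncomputable def energy (κ ε : ℝ) (τ τ' : ℝ → ℝ) (t : ℝ) : ℝ :=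
  τ' t ^ 2 + ε ^ 2 / τ t ^ 2 - 4 * κ * Real.log (τ t)

lemma hasDerivAt_energy {κ ε ν t : ℝ} {τ τ' : ℝ → ℝ} (hτt : τ t ≠ 0)
    (hτ : HasDerivAt τ (τ' t) t)
    (hτ' : HasDerivAt τ' (2 * κ / τ t + ε ^ 2 / τ t ^ 3 - ν * τ' t / τ t ^ 2) t) :
    HasDerivAt (energy κ ε τ τ') (-2 * ν * (τ' t / τ t) ^ 2) t := by
  have h := ((hτ'.pow 2).add ((hasDerivAt_const t (ε ^ 2)).div (hτ.pow 2)
    (pow_ne_zero 2 hτt))).sub ((hτ.log hτt).const_mul (4 * κ))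
  refine h.congr_deriv ?_
  simp only [Pi.pow_apply]
  field_simp
  ring

lemma energy_antitoneOn {κ ε ν T : ℝ} {τ τ' : ℝ → ℝ} (hν : 0 ≤ ν)
    (hpos : ∀ t ∈ Ico 0 T, 0 < τ t)
    (hτ : ∀ t ∈ Ico 0 T, HasDerivAt τ (τ' t) t)
    (hτ' : ∀ t ∈ Ico 0 T,
      HasDerivAt τ' (2 * κ / τ t + ε ^ 2 / τ t ^ 3 - ν * τ' t / τ t ^ 2) t) :
    AntitoneOn (energy κ ε τ τ') (Ico 0 T) :=
  antitoneOn_of_hasDerivAt_nonpos (convex_Ico 0 T)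
    (fun t ht ↦ hasDerivAt_energy (hpos t ht).ne' (hτ t ht) (hτ' t ht))
    (fun t _ ↦ by have := mul_nonneg hν (sq_nonneg (τ' t / τ t)); linarith)

lemma exp_le_of_energy_le {κ α β ε v x : ℝ} (hκ : 0 < κ) (hα : 0 < α) (hx : 0 < x)
    (h : v ^ 2 + ε ^ 2 / x ^ 2 - 4 * κ * Real.log x ≤
      β ^ 2 + ε ^ 2 / α ^ 2 - 4 * κ * Real.log α) :
    Real.exp (-(β ^ 2 - 4 * κ * Real.log α + ε ^ 2 / (2 * α ^ 2)) / (4 * κ)) ≤ x := by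
  have hεα : 0 ≤ ε ^ 2 / (2 * α ^ 2) := by positivity
  -- The constant carries only half of the initial `ε²/α²`, so the `ε`-terms are compared
  -- separately according to whether `x` lies above or below `α`.
  have hlog : -(β ^ 2 - 4 * κ * Real.log α + ε ^ 2 / (2 * α ^ 2)) ≤ 4 * κ * Real.log x := by
    rcases le_or_gt α x with hαx | hxα
    · have := Real.log_le_log hα hαx
      nlinarith [sq_nonneg β]
    · have : ε ^ 2 / α ^ 2 ≤ ε ^ 2 / x ^ 2 :=
        div_le_div_of_nonneg_left (sq_nonneg ε) (by positivity) (by gcongr)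
      nlinarith [sq_nonneg v]
  calc Real.exp (-(β ^ 2 - 4 * κ * Real.log α + ε ^ 2 / (2 * α ^ 2)) / (4 * κ))
      ≤ Real.exp (Real.log x) := Real.exp_le_exp.mpr ((div_le_iff₀ (by positivity)).mpr
        (by linarith))
    _ = x := Real.exp_log hx

theorem stmt_5_general (κ α β ε ν T : ℝ) (hκ : 0 < κ)
    (hν : 0 ≤ ν)
    (τ τ' : ℝ → ℝ)
    (hpos : ∀ t ∈ Ico (0:ℝ) T, 0 < τ t)
    (hτ : ∀ t ∈ Ico (0:ℝ) T, HasDerivAt τ (τ' t) t)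
    (hτ' : ∀ t ∈ Ico (0:ℝ) T,
      HasDerivAt τ' (2 * κ / τ t + ε ^ 2 / (τ t) ^ 3 - ν * τ' t / (τ t) ^ 2) t)
    (h0 : τ 0 = α) (h0' : τ' 0 = β) :
    ∀ t ∈ Ico (0:ℝ) T,
      Real.exp (-(β ^ 2 - 4 * κ * Real.log α + ε ^ 2 / (2 * α ^ 2)) / (4 * κ)) ≤ τ t := by
  intro t ht
  have h0mem : (0:ℝ) ∈ Ico 0 T := ⟨le_rfl, ht.1.trans_lt ht.2⟩
  have hα : 0 < α := h0 ▸ hpos 0 h0mem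
  have hdecay := energy_antitoneOn hν hpos hτ hτ' h0mem ht ht.1
  rw [energy, energy, h0, h0'] at hdecay
  exact exp_le_of_energy_le hκ hα (hpos t ht) hdecay

/-- Lower bound for solutions of τ'' = 2κ/τ + ε²/τ³ − ν τ'/τ²:
    τ(t) ≥ exp(−C/(4κ)) with C = β² − 4κ ln α + ε²/(2α²). -/
theorem stmt_5 (κ α β ε ν T : ℝ) (hκ : 0 < κ) (hα : 0 < α)
    (hε : 0 ≤ ε) (hν : 0 ≤ ν) (hT : 0 < T)
    (τ τ' : ℝ → ℝ)
    (hpos : ∀ t ∈ Ico (0:ℝ) T, 0 < τ t)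
    (hτ : ∀ t ∈ Ico (0:ℝ) T, HasDerivAt τ (τ' t) t)
    (hτ' : ∀ t ∈ Ico (0:ℝ) T,
      HasDerivAt τ' (2 * κ / τ t + ε ^ 2 / (τ t) ^ 3 - ν * τ' t / (τ t) ^ 2) t)
    (h0 : τ 0 = α) (h0' : τ' 0 = β) :
    ∀ t ∈ Ico (0:ℝ) T,
      Real.exp (-(β ^ 2 - 4 * κ * Real.log α + ε ^ 2 / (2 * α ^ 2)) / (4 * κ)) ≤ τ t :=
  stmt_5_general κ α β ε ν T hκ hν τ τ' hpos hτ hτ' h0 h0'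
end

section
/- Let f, g : ℝ^d → [0,∞) be integrable with ∫f = ∫g and g > 0 a.e. Then ‖f − g‖_{L¹(ℝ^d)}² ≤ 2 ‖f‖_{L¹(ℝ^d)} ∫_{ℝ^d} f(x) ln(f(x)/g(x)) dx (Csiszár–Kullback inequality). -/
/-!
Pointwise, `3 (a - b)² ≤ (2a + 4b) (a log (a / b) - a + b)` for `a ≥ 0`, `b > 0`: with `x = a / b`
this says that `(2x + 4) klFun x - 3 (x - 1)²` is nonnegative, which holds because that function
is convex on `[0, ∞)` with a critical point at `x = 1`. Put `w = (2f + 4g) / 3`. Cauchy–Schwarz gives `(∫ |f - g|)² ≤ ∫ (f - g)² / w · ∫ w`;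
the first factor is at most `∫ (f log (f / g) - f + g) = ∫ f log (f / g)` and the second is
`2 ∫ f`, both by the equality of the masses.
-/

open MeasureTheory Real Set InformationTheory

lemma convexOn_two_mul_add_four_mul_klFun_sub :
    ConvexOn ℝ (Ici 0) (fun x => (2 * x + 4) * klFun x - 3 * (x - 1) ^ 2) := by
  refine convexOn_of_hasDerivWithinAt2_nonneg (convex_Ici 0)
    (f' := fun x => 2 * klFun x + (2 * x + 4) * log x - 6 * (x - 1))
    (f'' := fun x => 4 * (log x + x⁻¹ - 1)) (by fun_prop) (fun x hx => ?_) (fun x hx => ?_)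
    (fun x hx => ?_) <;> rw [interior_Ici] at hx <;> have hx0 : x ≠ 0 := hx.ne'
  · refine HasDerivAt.hasDerivWithinAt ?_
    have h := ((((hasDerivAt_id' x).const_mul 2).add_const 4).fun_mul
      (hasDerivAt_klFun hx0)).fun_sub ((((hasDerivAt_id' x).sub_const 1).fun_pow 2).const_mul 3)
    exact h.congr_deriv (by ring)
  · refine HasDerivAt.hasDerivWithinAt ?_
    have h := (((hasDerivAt_klFun hx0).const_mul 2).fun_add
      ((((hasDerivAt_id' x).const_mul 2).add_const 4).fun_mul (hasDerivAt_log hx0))).fun_sub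
      (((hasDerivAt_id' x).sub_const 1).const_mul 6)
    exact h.congr_deriv (by field_simp; ring)
  · have := one_sub_inv_le_log_of_pos hx
    linarith

lemma three_mul_sq_sub_one_le_mul_klFun {x : ℝ} (hx : 0 ≤ x) :
    3 * (x - 1) ^ 2 ≤ (2 * x + 4) * klFun x := by
  have hmin : IsMinOn (fun x => (2 * x + 4) * klFun x - 3 * (x - 1) ^ 2) (Ici 0) 1 := by
    refine convexOn_two_mul_add_four_mul_klFun_sub.isMinOn_of_rightDeriv_eq_zero
      (by simp) ?_
    have h := ((((hasDerivAt_id' (1 : ℝ)).const_mul 2).add_const 4).fun_mul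
      (hasDerivAt_klFun one_ne_zero)).fun_sub
      ((((hasDerivAt_id' (1 : ℝ)).sub_const 1).fun_pow 2).const_mul 3)
    rw [h.hasDerivWithinAt.derivWithin (uniqueDiffWithinAt_Ioi 1)]
    simp [klFun_one]
  simpa [klFun_one] using hmin (mem_Ici.2 hx)

lemma sq_sub_div_le_mul_log_div_sub_add {a b : ℝ} (ha : 0 ≤ a) (hb : 0 < b) :
    (a - b) ^ 2 / ((2 * a + 4 * b) / 3) ≤ a * log (a / b) - a + b := by
  have hkl := three_mul_sq_sub_one_le_mul_klFun (div_nonneg ha hb.le)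
  rw [klFun_apply] at hkl
  rw [div_le_iff₀ (by positivity)]
  field_simp at hkl ⊢
  linear_combination hkl

lemma sq_integral_abs_le_integral_sq_div_mul_integral {α : Type*} [MeasurableSpace α]
    {μ : Measure α} {u w : α → ℝ} (hu : Integrable u μ)
    (huw : Integrable (fun x => u x ^ 2 / w x) μ) (hw : Integrable w μ)
    (hw0 : ∀ᵐ x ∂μ, 0 < w x) :
    (∫ x, |u x| ∂μ) ^ 2 ≤ (∫ x, u x ^ 2 / w x ∂μ) * ∫ x, w x ∂μ := by
  set A := ∫ x, u x ^ 2 / w x ∂μ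
  set B := ∫ x, w x ∂μ
  set C := ∫ x, |u x| ∂μ
  -- the quadratic `t ↦ ∫ (t |u| + w)² / w` is nonnegative, so its discriminant is nonpositive
  have hquad : ∀ t : ℝ, 0 ≤ A * (t * t) + 2 * C * t + B := by
    intro t
    have hexpand : (fun x => (t * |u x| + w x) ^ 2 / w x)
        =ᵐ[μ] fun x => t ^ 2 * (u x ^ 2 / w x) + 2 * t * |u x| + w x := by
      filter_upwards [hw0] with x hx
      field_simp
      linear_combination t ^ 2 * sq_abs (u x)
    calc 0 ≤ ∫ x, (t * |u x| + w x) ^ 2 / w x ∂μ :=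
          integral_nonneg_of_ae (by filter_upwards [hw0] with x hx; positivity)
      _ = A * (t * t) + 2 * C * t + B := by
        rw [integral_congr_ae hexpand,
          integral_add ((huw.const_mul _).fun_add (hu.abs.const_mul _)) hw,
          integral_add (huw.const_mul _) (hu.abs.const_mul _), integral_const_mul,
          integral_const_mul]
        ring
  have := discrim_le_zero hquad
  rw [discrim] at this
  nlinarith

theorem sq_integral_abs_sub_le_two_mul_integral_mul_integral_mul_log {α : Type*}
    [MeasurableSpace α] {μ : Measure α} {f g : α → ℝ} (hf : Integrable f μ)
    (hg : Integrable g μ) (hf0 : 0 ≤ᵐ[μ] f) (hg0 : ∀ᵐ x ∂μ, 0 < g x)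
    (hmass : ∫ x, f x ∂μ = ∫ x, g x ∂μ)
    (hent : Integrable (fun x => f x * log (f x / g x)) μ) :
    (∫ x, |f x - g x| ∂μ) ^ 2 ≤ 2 * (∫ x, f x ∂μ) * ∫ x, f x * log (f x / g x) ∂μ := by
  set w := fun x => (2 * f x + 4 * g x) / 3 with hw_def
  have hw : Integrable w μ := ((hf.const_mul 2).add (hg.const_mul 4)).div_const 3
  have hw0 : ∀ᵐ x ∂μ, 0 < w x := by
    filter_upwards [hf0, hg0] with x hfx hgx
    simp only [hw_def, Pi.zero_apply] at hfx ⊢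
    positivity
  have hbound : ∀ᵐ x ∂μ, (f x - g x) ^ 2 / w x ≤ f x * log (f x / g x) - f x + g x := by
    filter_upwards [hf0, hg0] with x hfx hgx
    exact sq_sub_div_le_mul_log_div_sub_add hfx hgx
  have hgap : Integrable (fun x => f x * log (f x / g x) - f x + g x) μ := (hent.sub hf).add hg
  have hquot : Integrable (fun x => (f x - g x) ^ 2 / w x) μ := by
    refine hgap.mono' (((hf.aemeasurable.sub hg.aemeasurable).pow_const 2).div
      hw.aemeasurable).aestronglyMeasurable ?_
    filter_upwards [hbound, hw0] with x hx hwx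
    rw [Real.norm_of_nonneg (by positivity)]
    exact hx
  have hquot_le : ∫ x, (f x - g x) ^ 2 / w x ∂μ ≤ ∫ x, f x * log (f x / g x) ∂μ := by
    calc _ ≤ ∫ x, f x * log (f x / g x) - f x + g x ∂μ := integral_mono_ae hquot hgap hbound
      _ = _ := by
        rw [integral_add (f := fun x => f x * log (f x / g x) - f x) (hent.sub hf) hg,
          integral_sub hent hf, hmass]
        ring
  have hw_int : ∫ x, w x ∂μ = 2 * ∫ x, f x ∂μ := by
    rw [hw_def, integral_div, integral_add (hf.const_mul 2) (hg.const_mul 4), integral_const_mul,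
      integral_const_mul, ← hmass]
    ring
  calc (∫ x, |f x - g x| ∂μ) ^ 2 ≤ (∫ x, (f x - g x) ^ 2 / w x ∂μ) * ∫ x, w x ∂μ :=
        sq_integral_abs_le_integral_sq_div_mul_integral (hf.sub hg) hquot hw hw0
    _ ≤ (∫ x, f x * log (f x / g x) ∂μ) * ∫ x, w x ∂μ :=
        mul_le_mul_of_nonneg_right hquot_le (integral_nonneg_of_ae (hw0.mono fun _ h => h.le))
    _ = _ := by rw [hw_int]; ring

/-- Csiszár–Kullback inequality:
    ‖f − g‖_{L¹}² ≤ 2 ‖f‖_{L¹} ∫ f ln(f/g). -/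
theorem stmt_8 (d : ℕ) (f g : EuclideanSpace ℝ (Fin d) → ℝ)
    (hf : Integrable f) (hg : Integrable g)
    (hf0 : ∀ x, 0 ≤ f x) (hg0 : ∀ᵐ x, 0 < g x)
    (hmass : ∫ x, f x = ∫ x, g x)
    (hent : Integrable (fun x => f x * Real.log (f x / g x))) :
    (∫ x, |f x - g x|) ^ 2
      ≤ 2 * (∫ x, f x) * ∫ x, f x * Real.log (f x / g x) :=
  sq_integral_abs_sub_le_two_mul_integral_mul_integral_mul_log hf hg
    (Filter.Eventually.of_forall hf0) hg0 hmass hent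
end

section
/- Let κ > 0 and let τ : [0,∞) → (0,∞) be the solution of τ'' = 2κ/τ, τ(0)=1, τ'(0)=0. Then ∫₀^∞ (τ'(t)/τ(t))² dt < ∞ and ∫₀^∞ dt/τ(t)² < ∞. -/
/-!
Since `τ'' = 2κ/τ > 0`, the derivative `τ'` increases from `τ' 0 = 0`; hence `τ ≥ 1` and `τ`
lies above its tangent line at `1`, so it grows at least linearly and `τ ^ (-3/2)` is integrable
on `[0, ∞)`. Multiplying the equation by `τ'` gives the conserved energy `τ'² = 4κ log τ`, so
`(τ'/τ)² = 4κ log τ / τ² ≤ 8κ τ ^ (-3/2)` by `log x ≤ 2 √x`, while `1/τ² ≤ τ ^ (-3/2)` as `τ ≥ 1`.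
-/

open Set MeasureTheory

theorem integrableOn_of_continuousOn_of_abs_le {f g : ℝ → ℝ} {s : Set ℝ} (hs : MeasurableSet s)
    (hg : IntegrableOn g s) (hf : ContinuousOn f s) (hfg : ∀ t ∈ s, |f t| ≤ g t) :
    IntegrableOn f s :=
  hg.mono' (hf.aestronglyMeasurable hs)
    (ae_restrict_of_forall_mem hs fun t ht => (Real.norm_eq_abs _).trans_le (hfg t ht))

theorem integrableOn_Ici_rpow_neg_of_mul_le {f : ℝ → ℝ} {m s : ℝ} (hf : ContinuousOn f (Ici 0))
    (hpos : ∀ t ∈ Ici 0, 0 < f t) (hm : 0 < m) (hs : 1 < s) (hlin : ∀ t ∈ Ici 1, m * t ≤ f t) :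
    IntegrableOn (fun t => f t ^ (-s)) (Ici 0) := by
  have hcont : ContinuousOn (fun t => f t ^ (-s)) (Ici 0) :=
    hf.rpow_const fun t ht => Or.inl (hpos t ht).ne'
  have hnear : IntegrableOn (fun t => f t ^ (-s)) (Icc 0 1) :=
    (hcont.mono Icc_subset_Ici_self).integrableOn_compact isCompact_Icc
  have hfar : IntegrableOn (fun t => f t ^ (-s)) (Ioi 1) := by
    refine integrableOn_of_continuousOn_of_abs_le measurableSet_Ioi
      ((integrableOn_Ioi_rpow_of_lt (a := -s) (by linarith) one_pos).const_mul (m ^ (-s)))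
      (hcont.mono fun t (ht : 1 < t) => mem_Ici.2 (by linarith)) fun t ht => ?_
    have ht : 1 < t := ht
    have hft := hpos t (mem_Ici.2 (by linarith))
    calc |f t ^ (-s)| = f t ^ (-s) := abs_of_pos (Real.rpow_pos_of_pos hft _)
      _ ≤ (m * t) ^ (-s) :=
        Real.rpow_le_rpow_of_nonpos (by positivity) (hlin t ht.le) (by linarith)
      _ = m ^ (-s) * t ^ (-s) := Real.mul_rpow hm.le (by linarith)
  rw [← Icc_union_Ici_eq_Ici zero_le_one, integrableOn_union, integrableOn_Ici_iff_integrableOn_Ioi]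
  exact ⟨hnear, hfar⟩

theorem monotoneOn_Ici_of_hasDerivAt_nonneg {f f' : ℝ → ℝ} {a : ℝ}
    (hf : ∀ t ∈ Ici a, HasDerivAt f (f' t) t) (hf' : ∀ t ∈ Ioi a, 0 ≤ f' t) :
    MonotoneOn f (Ici a) :=
  monotoneOn_of_hasDerivWithinAt_nonneg (convex_Ici a) (HasDerivAt.continuousOn hf)
    (fun t ht => (hf t (interior_subset ht)).hasDerivWithinAt)
    (fun t ht => hf' t (by rwa [interior_Ici] at ht))

theorem add_mul_sub_le_of_monotoneOn_deriv {f f' : ℝ → ℝ} {a : ℝ}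
    (hf : ∀ t ∈ Ici a, HasDerivAt f (f' t) t) (hmono : MonotoneOn f' (Ici a)) :
    ∀ t ∈ Ici a, f a + f' a * (t - a) ≤ f t := by
  have hg : MonotoneOn (fun t => f t - f' a * t) (Ici a) :=
    monotoneOn_Ici_of_hasDerivAt_nonneg
      (fun t ht => (hf t ht).sub ((hasDerivAt_id t).const_mul (f' a)))
      fun t ht => by
        have := hmono self_mem_Ici (mem_Ici.2 (le_of_lt ht)) (le_of_lt ht)
        simp only [mul_one]; linarith
  intro t ht
  have := hg self_mem_Ici ht ht
  simp only at this
  linarith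

theorem log_div_sq_le_rpow {x : ℝ} (hx : 0 < x) : Real.log x / x ^ 2 ≤ 2 * x ^ (-(3 / 2 : ℝ)) := by
  have hlog : Real.log x ≤ 2 * x ^ (1 / 2 : ℝ) := by
    have := Real.log_le_rpow_div hx.le (by norm_num : (0:ℝ) < 1 / 2)
    linarith [show x ^ (1 / 2 : ℝ) / (1 / 2) = 2 * x ^ (1 / 2 : ℝ) by ring]
  have hsplit : x ^ (1 / 2 : ℝ) = x ^ (-(3 / 2 : ℝ)) * x ^ 2 := by
    rw [← Real.rpow_natCast, ← Real.rpow_add hx]; norm_num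
  rw [div_le_iff₀ (by positivity)]
  linarith [hsplit ▸ hlog]

theorem one_div_sq_le_rpow {x : ℝ} (hx : 1 ≤ x) : 1 / x ^ 2 ≤ x ^ (-(3 / 2 : ℝ)) := by
  rw [one_div, ← Real.rpow_natCast, ← Real.rpow_neg (by linarith)]
  exact Real.rpow_le_rpow_of_exponent_le hx (by norm_num)

namespace InverseForceODE

structure IsSolution (κ : ℝ) (τ τ' : ℝ → ℝ) : Prop where
  pos : ∀ t ∈ Ici (0:ℝ), 0 < τ t
  hasDerivAt : ∀ t ∈ Ici (0:ℝ), HasDerivAt τ (τ' t) t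
  hasDerivAt_deriv : ∀ t ∈ Ici (0:ℝ), HasDerivAt τ' (2 * κ / τ t) t
  map_zero : τ 0 = 1
  deriv_zero : τ' 0 = 0

variable {κ : ℝ} {τ τ' : ℝ → ℝ}

theorem IsSolution.continuousOn (h : IsSolution κ τ τ') : ContinuousOn τ (Ici 0) :=
  HasDerivAt.continuousOn h.hasDerivAt

theorem IsSolution.strictMonoOn_deriv (h : IsSolution κ τ τ') (hκ : 0 < κ) :
    StrictMonoOn τ' (Ici 0) :=
  strictMonoOn_of_hasDerivWithinAt_pos (convex_Ici 0) (HasDerivAt.continuousOn h.hasDerivAt_deriv)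
    (fun t ht => (h.hasDerivAt_deriv t (interior_subset ht)).hasDerivWithinAt)
    fun t ht => div_pos (by positivity) (h.pos t (interior_subset ht))

theorem IsSolution.deriv_nonneg (h : IsSolution κ τ τ') (hκ : 0 < κ) :
    ∀ t ∈ Ici 0, 0 ≤ τ' t := fun _ ht =>
  h.deriv_zero ▸ (h.strictMonoOn_deriv hκ).monotoneOn self_mem_Ici ht ht

theorem IsSolution.one_le (h : IsSolution κ τ τ') (hκ : 0 < κ) : ∀ t ∈ Ici 0, 1 ≤ τ t :=
  fun _ ht => h.map_zero ▸ monotoneOn_Ici_of_hasDerivAt_nonneg h.hasDerivAt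
    (fun s hs => h.deriv_nonneg hκ s (mem_Ici.2 (le_of_lt hs))) self_mem_Ici ht ht

-- Energy conservation: `τ'² - 4κ log τ` has derivative `2τ' · 2κ/τ - 4κ · τ'/τ = 0`.
theorem IsSolution.sq_deriv_eq (h : IsSolution κ τ τ') :
    ∀ t ∈ Ici 0, τ' t ^ 2 = 4 * κ * Real.log (τ t) := by
  set E : ℝ → ℝ := fun t => τ' t ^ 2 - 4 * κ * Real.log (τ t)
  have hE : ∀ t ∈ Ici (0:ℝ), HasDerivAt E 0 t := by
    intro t ht
    have hd := ((h.hasDerivAt_deriv t ht).fun_pow 2).fun_sub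
      (((h.hasDerivAt t ht).log (h.pos t ht).ne').const_mul (4 * κ))
    refine hd.congr_deriv ?_
    field_simp [(h.pos t ht).ne']
    ring
  intro t ht
  have hconst := constant_of_has_deriv_right_zero (HasDerivAt.continuousOn fun s hs => hE s hs.1)
    (fun s hs => (hE s hs.1).hasDerivWithinAt) t ⟨ht, le_rfl⟩
  simp only [E, h.map_zero, h.deriv_zero, Real.log_one] at hconst
  linarith

theorem IsSolution.exists_pos_mul_le (h : IsSolution κ τ τ') (hκ : 0 < κ) :
    ∃ m > 0, ∀ t ∈ Ici 1, m * t ≤ τ t := by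
  have hmono := h.strictMonoOn_deriv hκ
  have hc : 0 < τ' 1 := h.deriv_zero ▸ hmono self_mem_Ici (by norm_num) one_pos
  have htangent := add_mul_sub_le_of_monotoneOn_deriv
    (fun t ht => h.hasDerivAt t (mem_Ici.2 (zero_le_one.trans ht)))
    (hmono.monotoneOn.mono (Ici_subset_Ici.2 zero_le_one))
  have h1 := h.one_le hκ 1 (by norm_num)
  refine ⟨min (τ' 1) 1, lt_min hc one_pos, fun t ht => ?_⟩
  have ht : 1 ≤ t := ht
  have := htangent t ht
  nlinarith [min_le_left (τ' 1) 1, min_le_right (τ' 1) 1]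

theorem IsSolution.integrableOn_rpow_neg (h : IsSolution κ τ τ') (hκ : 0 < κ) {s : ℝ}
    (hs : 1 < s) : IntegrableOn (fun t => τ t ^ (-s)) (Ici 0) := by
  obtain ⟨m, hm, hlin⟩ := h.exists_pos_mul_le hκ
  exact integrableOn_Ici_rpow_neg_of_mul_le h.continuousOn h.pos hm hs hlin

end InverseForceODE

/-- For the solution of τ'' = 2κ/τ, τ(0)=1, τ'(0)=0, the functions
    (τ'/τ)² and 1/τ² are integrable on [0,∞). -/
theorem stmt_17 (κ : ℝ) (hκ : 0 < κ)
    (τ τ' : ℝ → ℝ)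
    (hpos : ∀ t ∈ Ici (0:ℝ), 0 < τ t)
    (hτ : ∀ t ∈ Ici (0:ℝ), HasDerivAt τ (τ' t) t)
    (hτ' : ∀ t ∈ Ici (0:ℝ), HasDerivAt τ' (2 * κ / τ t) t)
    (h0 : τ 0 = 1) (h0' : τ' 0 = 0) :
    IntegrableOn (fun t => (τ' t / τ t) ^ 2) (Ici 0) ∧
      IntegrableOn (fun t => 1 / (τ t) ^ 2) (Ici 0) := by
  have h : InverseForceODE.IsSolution κ τ τ' := ⟨hpos, hτ, hτ', h0, h0'⟩
  have hdecay := h.integrableOn_rpow_neg hκ (s := 3 / 2) (by norm_num)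
  have hcont' : ContinuousOn τ' (Ici 0) := HasDerivAt.continuousOn hτ'
  constructor
  · refine integrableOn_of_continuousOn_of_abs_le measurableSet_Ici (hdecay.const_mul (8 * κ))
      ((hcont'.div h.continuousOn fun t ht => (hpos t ht).ne').pow 2) fun t ht => ?_
    rw [abs_of_nonneg (sq_nonneg _), div_pow, h.sq_deriv_eq t ht, mul_div_assoc]
    linarith [mul_le_mul_of_nonneg_left (log_div_sq_le_rpow (hpos t ht)) (by linarith : 0 ≤ 4 * κ)]
  · refine integrableOn_of_continuousOn_of_abs_le measurableSet_Ici hdecay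
      (continuousOn_const.div (h.continuousOn.pow 2) fun t ht => (pow_pos (hpos t ht) 2).ne')
      fun t ht => ?_
    rw [abs_of_nonneg (by positivity)]
    exact one_div_sq_le_rpow (h.one_le hκ t ht)
end
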